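/- Let J be a finite nonempty index set with Δy_j > 0 for each j ∈ J and B = Σ_{j∈J} Δy_j. Let A_c, A_1^n be real numbers and h_{2,j}^n ≥ 0 for j ∈ J, and assume the invariant A_1^n = min(A_1^n + Σ_j h_{2,j}^n Δy_j, A_c). Suppose the intermediate solutions are well-balanced: A_1^{n+1*} = A_1^n and h_{2,j}^{n+1*} = h_{2,j}^n for all j. Define A^{n+1} = A_1^{n+1*} + Σ_j h_{2,j}^{n+1*} Δy_j, A_1^{n+1} = min(A^{n+1}, A_c), and h_{2,j}^{n+1} = 0 if A^{n+1} ≤ A_c, while h_{2,j}^{n+1} = h_{2,j}^{n+1*} + (A_1^{n+1*} − A_c)/B if A^{n+1} > A_c. Then A_1^{n+1} = A_1^n, h_{2,j}^{n+1} = h_{2,j}^n for all j ∈ J, and for every function 𝓗 : ℝ → (J → ℝ) the full depths H_j^{n+1} = 𝓗(A_1^{n+1})_j + h_{2,j}^{n+1} satisfy H_j^{n+1} = 𝓗(A_1^n)_j + h_{2,j}^n = H_j^n. -/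

import Mathlib

/-!
With well-balanced intermediate solutions everything reduces to the invariant
`A₁ = min (A₁ + ∑ h₂ⱼ Δyⱼ) A_c`. If the channel is not over-full it forces the weighted sum, hence
every nonnegative `h₂ⱼ`, to vanish, which is what case 1 sets; if it is over-full it forces
`A₁ = A_c`, so the excess height added in case 2a is zero.
-/

open Finset

lemma eq_zero_of_sum_mul_eq_zero {ι R : Type*} [Semiring R] [PartialOrder R] [IsOrderedRing R]
    [NoZeroDivisors R] {s : Finset ι} {h w : ι → R} (hh : ∀ i ∈ s, 0 ≤ h i)
    (hw : ∀ i ∈ s, 0 < w i) (hsum : ∑ i ∈ s, h i * w i = 0) {j : ι} (hj : j ∈ s) :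
    h j = 0 := by
  have hterm : h j * w j = 0 :=
    (sum_eq_zero_iff_of_nonneg fun i hi => mul_nonneg (hh i hi) (hw i hi).le).mp hsum j hj
  exact (mul_eq_zero.mp hterm).resolve_right (hw j hj).ne'

lemma sum_eq_zero_of_eq_min_add_of_add_le {R : Type*} [AddCommGroup R] [LinearOrder R]
    [IsOrderedAddMonoid R] {a s c : R} (hinv : a = min (a + s) c) (hle : a + s ≤ c) : s = 0 := by
  rw [min_eq_left hle] at hinv
  exact add_eq_left.mp hinv.symm

lemma eq_of_eq_min_add_of_lt {R : Type*} [LinearOrder R] [Add R] {a s c : R}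
    (hinv : a = min (a + s) c) (hlt : c < a + s) : a = c := by
  rwa [min_eq_right hlt.le] at hinv

theorem well_balanced_heights_general (J : Type*) [Fintype J]
    (Δy : J → ℝ) (hΔy : ∀ j, 0 < Δy j) (B : ℝ)
    (Ac A1n : ℝ) (h2n : J → ℝ) (hh2n : ∀ j, 0 ≤ h2n j)
    (hinv : A1n = min (A1n + ∑ j, h2n j * Δy j) Ac)
    (A1star : ℝ) (h2star : J → ℝ)
    (hA1star : A1star = A1n) (hh2star : ∀ j, h2star j = h2n j)
    (Anew A1new : ℝ) (h2new : J → ℝ)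
    (hAnew : Anew = A1star + ∑ j, h2star j * Δy j)
    (hA1new : A1new = min Anew Ac)
    (hh2new : ∀ j, h2new j = if Anew ≤ Ac then 0 else h2star j + (A1star - Ac) / B) :
    A1new = A1n ∧ (∀ j, h2new j = h2n j) ∧
      ∀ 𝓗 : ℝ → (J → ℝ), ∀ j, 𝓗 A1new j + h2new j = 𝓗 A1n j + h2n j := by
  obtain rfl : h2star = h2n := funext hh2star
  subst hA1star hAnew hA1new
  have hA1 : min (A1star + ∑ j, h2star j * Δy j) Ac = A1star := hinv.symm
  have hh2 : ∀ j, h2new j = h2star j := by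
    intro j
    rw [hh2new]
    split_ifs with hfull
    · exact (eq_zero_of_sum_mul_eq_zero (fun i _ => hh2n i) (fun i _ => hΔy i)
        (sum_eq_zero_of_eq_min_add_of_add_le hinv hfull) (mem_univ j)).symm
    · rw [eq_of_eq_min_add_of_lt hinv (not_le.mp hfull), sub_self, zero_div, add_zero]
  exact ⟨hA1, hh2, fun 𝓗 j => by rw [hA1, hh2]⟩

/-- Well-balanced property (height variables): if the intermediate solvers are
well-balanced then the full update leaves all heights unchanged. -/
theorem well_balanced_heights (J : Type*) [Fintype J] [Nonempty J]
    (Δy : J → ℝ) (hΔy : ∀ j, 0 < Δy j) (B : ℝ) (hB : B = ∑ j, Δy j)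
    (Ac A1n : ℝ) (h2n : J → ℝ) (hh2n : ∀ j, 0 ≤ h2n j)
    (hinv : A1n = min (A1n + ∑ j, h2n j * Δy j) Ac)
    (A1star : ℝ) (h2star : J → ℝ)
    (hA1star : A1star = A1n) (hh2star : ∀ j, h2star j = h2n j)
    (Anew A1new : ℝ) (h2new : J → ℝ)
    (hAnew : Anew = A1star + ∑ j, h2star j * Δy j)
    (hA1new : A1new = min Anew Ac)
    (hh2new : ∀ j, h2new j = if Anew ≤ Ac then 0 else h2star j + (A1star - Ac) / B) :
    A1new = A1n ∧ (∀ j, h2new j = h2n j) ∧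
      ∀ 𝓗 : ℝ → (J → ℝ), ∀ j, 𝓗 A1new j + h2new j = 𝓗 A1n j + h2n j :=
  well_balanced_heights_general J Δy hΔy B Ac A1n h2n hh2n hinv A1star h2star hA1star hh2star Anew
    A1new h2new hAnew hA1new hh2new
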